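/- Assume λ_1 ≥ 48‖E‖ and that A has exactly r eigenvalues λ_i with λ_i ≥ λ_1/2. Then λ̃_1 − λ_1 ≤ max{ 6·r·x, 72·r·‖E‖²/λ_1 }, where x := max_{1≤i,j≤r} |u_iᵀ E u_j|. -/

import Mathlib

/-!
Let `ũ` be the top unit eigenvector of `A + E`, with coordinates `c i = u i ⬝ᵥ ũ` in the
eigenbasis of `A`. By the Rayleigh quotient, `λ̃₁ - λ₁ ≤ ũᵀ E ũ`, and by Weyl `λ̃₁ ≥ λ₁ - ‖E‖`,
so `λ̃₁` stays at distance `≥ 23 λ₁ / 48` from every eigenvalue `λ i < λ₁ / 2`. Since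
`(λ̃₁ - λ i) c i = u iᵀ E ũ`, the mass of `ũ` outside the top `r` eigenvectors is at most
`(48 ‖E‖ / (23 λ₁))²`. Splitting `ũ = a + b` along the top `r` eigenvectors and the rest,
`aᵀ E a ≤ r x` by Cauchy–Schwarz, and the two cross terms are `≤ ‖E‖ ‖b‖ ≤ 48 ‖E‖² / (23 λ₁)`.
Hence `λ̃₁ - λ₁ ≤ r x + 96 ‖E‖² / (23 λ₁)`, which is at most the stated maximum.
-/

open Matrix

/-- Spectral (ℓ²-operator) norm of a real matrix. -/
noncomputable def matOpNorm {m n : ℕ} (M : Matrix (Fin m) (Fin n) ℝ) : ℝ :=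
  ‖LinearMap.toContinuousLinearMap (Matrix.toEuclideanLin M)‖

open Finset

section Orthonormal

variable {ι : Type*} [Fintype ι] [DecidableEq ι] {u : ι → ι → ℝ}

theorem sum_dotProduct_mul_dotProduct_of_orthonormal
    (hu : ∀ i j, u i ⬝ᵥ u j = if i = j then 1 else 0) (v w : ι → ℝ) :
    ∑ i, (u i ⬝ᵥ v) * (u i ⬝ᵥ w) = v ⬝ᵥ w := by
  set U : Matrix ι ι ℝ := Matrix.of u
  have hU : U * Uᵀ = 1 := by
    ext i j
    simpa [U, mul_apply, one_apply, dotProduct] using hu i j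
  calc ∑ i, (u i ⬝ᵥ v) * (u i ⬝ᵥ w) = (U *ᵥ v) ⬝ᵥ (U *ᵥ w) := rfl
    _ = v ⬝ᵥ w := by
      rw [dotProduct_mulVec, ← mulVec_transpose, mulVec_mulVec, mul_eq_one_comm.mp hU, one_mulVec]

theorem dotProduct_sum_smul_of_orthonormal
    (hu : ∀ i j, u i ⬝ᵥ u j = if i = j then 1 else 0) (s : Finset ι) (c : ι → ℝ) (j : ι) :
    u j ⬝ᵥ ∑ i ∈ s, c i • u i = if j ∈ s then c j else 0 := by
  simp [dotProduct_sum, dotProduct_smul, hu]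

theorem sum_smul_dotProduct_self_of_orthonormal
    (hu : ∀ i j, u i ⬝ᵥ u j = if i = j then 1 else 0) (s : Finset ι) (c : ι → ℝ) :
    (∑ i ∈ s, c i • u i) ⬝ᵥ (∑ i ∈ s, c i • u i) = ∑ i ∈ s, c i ^ 2 := by
  rw [← sum_dotProduct_mul_dotProduct_of_orthonormal hu]
  simp [dotProduct_sum_smul_of_orthonormal hu, ← sq]

theorem eq_sum_dotProduct_smul_of_orthonormal
    (hu : ∀ i j, u i ⬝ᵥ u j = if i = j then 1 else 0) (v : ι → ℝ) :
    v = ∑ i, (u i ⬝ᵥ v) • u i := by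
  have h : ∀ j, u j ⬝ᵥ (v - ∑ i, (u i ⬝ᵥ v) • u i) = 0 := by
    simp [dotProduct_sub, dotProduct_sum_smul_of_orthonormal hu]
  rw [← sub_eq_zero, ← dotProduct_self_eq_zero, ← sum_dotProduct_mul_dotProduct_of_orthonormal hu]
  simp [h]

end Orthonormal

theorem sum_sum_mul_mul_le {ι : Type*} (s : Finset ι) (c : ι → ℝ) (m : ι → ι → ℝ) {x : ℝ}
    (hx : 0 ≤ x) (hm : ∀ i ∈ s, ∀ j ∈ s, |m i j| ≤ x) :
    ∑ i ∈ s, ∑ j ∈ s, c i * c j * m i j ≤ x * #s * ∑ i ∈ s, c i ^ 2 := by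
  calc ∑ i ∈ s, ∑ j ∈ s, c i * c j * m i j ≤ ∑ i ∈ s, ∑ j ∈ s, |c i| * |c j| * x := by
        refine sum_le_sum fun i hi => sum_le_sum fun j hj => ?_
        rw [← abs_mul]
        exact (le_abs_self _).trans (by rw [abs_mul]; gcongr; exact hm i hi j hj)
    _ = x * (∑ i ∈ s, |c i|) ^ 2 := by
        rw [sq, sum_mul_sum, mul_sum]
        simp_rw [mul_sum]
        exact sum_congr rfl fun i _ => sum_congr rfl fun j _ => by ring
    _ ≤ x * (#s * ∑ i ∈ s, c i ^ 2) := by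
        gcongr
        simpa using sq_sum_le_card_mul_sum_sq (s := s) (f := fun i => |c i|)
    _ = x * #s * ∑ i ∈ s, c i ^ 2 := by ring

theorem mulVec_dotProduct_mulVec_le {n : ℕ} (E : Matrix (Fin n) (Fin n) ℝ) (v : Fin n → ℝ) :
    (E *ᵥ v) ⬝ᵥ (E *ᵥ v) ≤ matOpNorm E ^ 2 * (v ⬝ᵥ v) := by
  have hnorm : ∀ w : Fin n → ℝ, ‖WithLp.toLp 2 w‖ ^ 2 = w ⬝ᵥ w := fun w => by
    rw [← real_inner_self_eq_norm_sq, EuclideanSpace.inner_toLp_toLp, star_trivial]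
  rw [← hnorm, ← hnorm, ← mul_pow]
  gcongr
  exact (LinearMap.toContinuousLinearMap (toEuclideanLin E)).le_opNorm (WithLp.toLp 2 v)

theorem sq_dotProduct_mulVec_le {n : ℕ} (E : Matrix (Fin n) (Fin n) ℝ) (v w : Fin n → ℝ) :
    (v ⬝ᵥ (E *ᵥ w)) ^ 2 ≤ matOpNorm E ^ 2 * (v ⬝ᵥ v) * (w ⬝ᵥ w) := by
  calc (v ⬝ᵥ (E *ᵥ w)) ^ 2 ≤ (v ⬝ᵥ v) * ((E *ᵥ w) ⬝ᵥ (E *ᵥ w)) := by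
        simpa [dotProduct, sq] using sum_mul_sq_le_sq_mul_sq univ v (E *ᵥ w)
    _ ≤ (v ⬝ᵥ v) * (matOpNorm E ^ 2 * (w ⬝ᵥ w)) := by
        gcongr
        · exact dotProduct_self_star_nonneg v
        · exact mulVec_dotProduct_mulVec_le E w
    _ = matOpNorm E ^ 2 * (v ⬝ᵥ v) * (w ⬝ᵥ w) := by ring

theorem dotProduct_mulVec_of_mulVec_eq_smul {ι : Type*} [Fintype ι] {M : Matrix ι ι ℝ}
    (hM : M.IsSymm) {w : ι → ℝ} {μ : ℝ} (hw : M *ᵥ w = μ • w) (v : ι → ℝ) :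
    w ⬝ᵥ (M *ᵥ v) = μ * (w ⬝ᵥ v) := by
  rw [dotProduct_mulVec, ← mulVec_transpose, hM, hw, smul_dotProduct, smul_eq_mul]

section Eigen

variable {ι : Type*} [Fintype ι] [DecidableEq ι] {u : ι → ι → ℝ} {lam : ι → ℝ}

theorem dotProduct_mulVec_le_of_eigenvalues_le {M : Matrix ι ι ℝ} (hM : M.IsSymm)
    (hu : ∀ i j, u i ⬝ᵥ u j = if i = j then 1 else 0) (hMu : ∀ i, M *ᵥ u i = lam i • u i)
    {L : ℝ} (hlam : ∀ i, lam i ≤ L) (v : ι → ℝ) : v ⬝ᵥ (M *ᵥ v) ≤ L * (v ⬝ᵥ v) := by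
  rw [← sum_dotProduct_mul_dotProduct_of_orthonormal hu v (M *ᵥ v),
    ← sum_dotProduct_mul_dotProduct_of_orthonormal hu v v, mul_sum]
  refine sum_le_sum fun i _ => ?_
  rw [dotProduct_mulVec_of_mulVec_eq_smul hM (hMu i)]
  nlinarith [hlam i, mul_self_nonneg (u i ⬝ᵥ v)]

theorem sub_le_dotProduct_mulVec_of_eigenvalues_le {A E : Matrix ι ι ℝ} (hA : A.IsSymm)
    (hu : ∀ i j, u i ⬝ᵥ u j = if i = j then 1 else 0) (hAu : ∀ i, A *ᵥ u i = lam i • u i)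
    {L : ℝ} (hlam : ∀ i, lam i ≤ L) {v : ι → ℝ} {μ : ℝ} (hv : v ⬝ᵥ v = 1)
    (hAEv : (A + E) *ᵥ v = μ • v) : μ - L ≤ v ⬝ᵥ (E *ᵥ v) := by
  have hμ : v ⬝ᵥ (A *ᵥ v) + v ⬝ᵥ (E *ᵥ v) = μ := by
    rw [← dotProduct_add, ← add_mulVec, hAEv, dotProduct_smul, hv, smul_eq_mul, mul_one]
  have hA := dotProduct_mulVec_le_of_eigenvalues_le hA hu hAu hlam v
  rw [hv, mul_one] at hA
  linarith

theorem sq_mul_sum_sq_dotProduct_le_of_gap {A E : Matrix ι ι ℝ} (hA : A.IsSymm)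
    (hu : ∀ i j, u i ⬝ᵥ u j = if i = j then 1 else 0) (hAu : ∀ i, A *ᵥ u i = lam i • u i)
    {v : ι → ℝ} {μ : ℝ} (hAEv : (A + E) *ᵥ v = μ • v) {s : Finset ι} {d : ℝ} (hd : 0 ≤ d)
    (hgap : ∀ i ∈ s, d ≤ |μ - lam i|) :
    d ^ 2 * ∑ i ∈ s, (u i ⬝ᵥ v) ^ 2 ≤ (E *ᵥ v) ⬝ᵥ (E *ᵥ v) := by
  have hcoord : ∀ i, (μ - lam i) * (u i ⬝ᵥ v) = u i ⬝ᵥ (E *ᵥ v) := fun i => by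
    have h := congrArg (u i ⬝ᵥ ·) hAEv
    simp only [add_mulVec, dotProduct_add, dotProduct_smul, smul_eq_mul,
      dotProduct_mulVec_of_mulVec_eq_smul hA (hAu i)] at h
    linarith
  calc d ^ 2 * ∑ i ∈ s, (u i ⬝ᵥ v) ^ 2 ≤ ∑ i ∈ s, (u i ⬝ᵥ (E *ᵥ v)) ^ 2 := by
        rw [mul_sum]
        refine sum_le_sum fun i hi => ?_
        rw [← hcoord, mul_pow, ← sq_abs (μ - lam i)]
        gcongr
        exact hgap i hi
    _ ≤ ∑ i, (u i ⬝ᵥ (E *ᵥ v)) ^ 2 :=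
        sum_le_sum_of_subset_of_nonneg (subset_univ s) fun _ _ _ => sq_nonneg _
    _ = (E *ᵥ v) ⬝ᵥ (E *ᵥ v) := by
        simp only [sq, sum_dotProduct_mul_dotProduct_of_orthonormal hu]

end Eigen

theorem abs_dotProduct_mulVec_le_matOpNorm {n : ℕ} (E : Matrix (Fin n) (Fin n) ℝ)
    {v w : Fin n → ℝ} (hv : v ⬝ᵥ v = 1) (hw : w ⬝ᵥ w = 1) :
    |v ⬝ᵥ (E *ᵥ w)| ≤ matOpNorm E :=
  abs_le_of_sq_le_sq (by simpa [hv, hw] using sq_dotProduct_mulVec_le E v w) (norm_nonneg _)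

theorem sub_matOpNorm_le_of_eigenvalues_le {n : ℕ} {A E : Matrix (Fin n) (Fin n) ℝ}
    (hAE : (A + E).IsSymm) {u : Fin n → Fin n → ℝ}
    (hu : ∀ i j, u i ⬝ᵥ u j = if i = j then 1 else 0) {lam : Fin n → ℝ}
    (hAEu : ∀ i, (A + E) *ᵥ u i = lam i • u i) {μ : ℝ} (hlam : ∀ i, lam i ≤ μ)
    {w : Fin n → ℝ} {ν : ℝ} (hw : w ⬝ᵥ w = 1) (hAw : A *ᵥ w = ν • w) :
    ν - matOpNorm E ≤ μ := by
  have h := dotProduct_mulVec_le_of_eigenvalues_le hAE hu hAEu hlam w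
  rw [add_mulVec, dotProduct_add, hAw, dotProduct_smul, hw, smul_eq_mul, mul_one, mul_one] at h
  linarith [neg_abs_le (w ⬝ᵥ (E *ᵥ w)), abs_dotProduct_mulVec_le_matOpNorm E hw hw]

theorem sub_le_matOpNorm_of_eigenvalues_le {n : ℕ} {A E : Matrix (Fin n) (Fin n) ℝ}
    (hA : A.IsSymm) {u : Fin n → Fin n → ℝ} (hu : ∀ i j, u i ⬝ᵥ u j = if i = j then 1 else 0)
    {lam : Fin n → ℝ} (hAu : ∀ i, A *ᵥ u i = lam i • u i) {L : ℝ} (hlam : ∀ i, lam i ≤ L)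
    {v : Fin n → ℝ} {μ : ℝ} (hv : v ⬝ᵥ v = 1) (hAEv : (A + E) *ᵥ v = μ • v) :
    μ - L ≤ matOpNorm E :=
  (sub_le_dotProduct_mulVec_of_eigenvalues_le hA hu hAu hlam hv hAEv).trans
    ((le_abs_self _).trans (abs_dotProduct_mulVec_le_matOpNorm E hv hv))

theorem dotProduct_mulVec_le_of_sum_sq_compl_le {n : ℕ} {u : Fin n → Fin n → ℝ}
    (hu : ∀ i j, u i ⬝ᵥ u j = if i = j then 1 else 0) (E : Matrix (Fin n) (Fin n) ℝ)
    {v : Fin n → ℝ} (hv : v ⬝ᵥ v = 1) {s : Finset (Fin n)} {x d : ℝ} (hx : 0 ≤ x)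
    (hxs : ∀ i ∈ s, ∀ j ∈ s, |u i ⬝ᵥ (E *ᵥ u j)| ≤ x) (hd : 0 < d)
    (htail : d ^ 2 * ∑ i ∈ sᶜ, (u i ⬝ᵥ v) ^ 2 ≤ matOpNorm E ^ 2) :
    v ⬝ᵥ (E *ᵥ v) ≤ x * #s + 2 * (matOpNorm E ^ 2 / d) := by
  set c : Fin n → ℝ := fun i => u i ⬝ᵥ v
  set a := ∑ i ∈ s, c i • u i
  set b := ∑ i ∈ sᶜ, c i • u i
  have hab : v = a + b := by
    rw [sum_add_sum_compl]
    exact eq_sum_dotProduct_smul_of_orthonormal hu v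
  have hcs : ∑ i ∈ s, c i ^ 2 ≤ 1 := by
    rw [← hv, ← sum_dotProduct_mul_dotProduct_of_orthonormal hu v v]
    simpa [sq] using sum_le_sum_of_subset_of_nonneg (subset_univ s)
      fun i _ _ => mul_self_nonneg (c i)
  have ha : a ⬝ᵥ a ≤ 1 := (sum_smul_dotProduct_self_of_orthonormal hu s c).trans_le hcs
  have hb : b ⬝ᵥ b = ∑ i ∈ sᶜ, c i ^ 2 := sum_smul_dotProduct_self_of_orthonormal hu _ _
  have hsplit : v ⬝ᵥ (E *ᵥ v) = a ⬝ᵥ (E *ᵥ a) + a ⬝ᵥ (E *ᵥ b) + b ⬝ᵥ (E *ᵥ v) := by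
    calc v ⬝ᵥ (E *ᵥ v) = a ⬝ᵥ (E *ᵥ (a + b)) + b ⬝ᵥ (E *ᵥ v) := by
          rw [← hab]; nth_rw 1 [hab]; rw [add_dotProduct]
      _ = _ := by rw [mulVec_add, dotProduct_add]
  have hblock : a ⬝ᵥ (E *ᵥ a) ≤ x * #s := by
    have h : a ⬝ᵥ (E *ᵥ a) = ∑ i ∈ s, ∑ j ∈ s, c i * c j * (u j ⬝ᵥ (E *ᵥ u i)) := by
      simp only [a, sum_dotProduct, dotProduct_sum, mulVec_sum, mulVec_smul, smul_dotProduct,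
        dotProduct_smul, smul_eq_mul, mul_sum, mul_assoc]
    rw [h]
    exact (sum_sum_mul_mul_le s c _ hx fun i hi j hj => hxs j hj i hi).trans
      (mul_le_of_le_one_right (mul_nonneg hx (Nat.cast_nonneg _)) hcs)
  have hcross : ∀ P : ℝ, P ^ 2 ≤ matOpNorm E ^ 2 * (b ⬝ᵥ b) → P ≤ matOpNorm E ^ 2 / d := by
    intro P hP
    rw [le_div_iff₀ hd]
    refine (abs_le_of_sq_le_sq' ?_ (sq_nonneg _)).2
    rw [hb] at hP
    nlinarith [mul_le_mul_of_nonneg_left hP (sq_nonneg d),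
      mul_le_mul_of_nonneg_left htail (sq_nonneg (matOpNorm E))]
  have h1 := hcross _ ((sq_dotProduct_mulVec_le E a b).trans (by
    rw [mul_right_comm]
    exact mul_le_of_le_one_right (mul_nonneg (sq_nonneg _) (dotProduct_self_star_nonneg b)) ha))
  have h2 := hcross _ ((sq_dotProduct_mulVec_le E b v).trans_eq (by rw [hv, mul_one]))
  linarith

theorem sub_le_of_gap {n : ℕ} {A E : Matrix (Fin n) (Fin n) ℝ} (hA : A.IsSymm)
    {u : Fin n → Fin n → ℝ} (hu : ∀ i j, u i ⬝ᵥ u j = if i = j then 1 else 0)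
    {lam : Fin n → ℝ} (hAu : ∀ i, A *ᵥ u i = lam i • u i) {L : ℝ} (hlam : ∀ i, lam i ≤ L)
    {v : Fin n → ℝ} {μ : ℝ} (hv : v ⬝ᵥ v = 1) (hAEv : (A + E) *ᵥ v = μ • v)
    {s : Finset (Fin n)} {x d : ℝ} (hx : 0 ≤ x)
    (hxs : ∀ i ∈ s, ∀ j ∈ s, |u i ⬝ᵥ (E *ᵥ u j)| ≤ x) (hd : 0 < d)
    (hgap : ∀ i ∈ sᶜ, d ≤ |μ - lam i|) :
    μ - L ≤ x * #s + 2 * (matOpNorm E ^ 2 / d) := by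
  have htail := (sq_mul_sum_sq_dotProduct_le_of_gap hA hu hAu hAEv hd.le hgap).trans
    ((mulVec_dotProduct_mulVec_le E v).trans_eq (by rw [hv, mul_one]))
  exact (sub_le_dotProduct_mulVec_of_eigenvalues_le hA hu hAu hlam hv hAEv).trans
    (dotProduct_mulVec_le_of_sum_sq_compl_le hu E hv hx hxs hd htail)

/-- Corollary 4.8: upper perturbation bound for the largest eigenvalue when
`A` has exactly `r` eigenvalues at least `λ_1/2`. -/
theorem largest_eigenvalue_upper_perturbation'
    {n : ℕ} (hn : 1 ≤ n) (A E : Matrix (Fin n) (Fin n) ℝ)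
    (hA : A.IsSymm) (hE : E.IsSymm)
    (lam tlam : Fin n → ℝ) (u tu : Fin n → (Fin n → ℝ))
    (hlam : Antitone lam) (htlam : Antitone tlam)
    (hu : ∀ i j, u i ⬝ᵥ u j = if i = j then (1 : ℝ) else 0)
    (htu : ∀ i j, tu i ⬝ᵥ tu j = if i = j then (1 : ℝ) else 0)
    (hAu : ∀ i, A *ᵥ u i = lam i • u i)
    (hAtu : ∀ i, (A + E) *ᵥ tu i = tlam i • tu i)
    (hlam1 : 48 * matOpNorm E ≤ lam ⟨0, by omega⟩)
    -- A has exactly r eigenvalues ≥ λ_1/2 :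
    (r : ℕ)
    (hrchar : ∀ i : Fin n, (i : ℕ) < r ↔ lam ⟨0, by omega⟩ / 2 ≤ lam i)
    (x : ℝ)
    (hx : IsLUB (insert (0 : ℝ)
      {t | ∃ i j : Fin n, (i : ℕ) < r ∧ (j : ℕ) < r ∧ t = |u i ⬝ᵥ (E *ᵥ u j)|}) x) :
    tlam ⟨0, by omega⟩ - lam ⟨0, by omega⟩ ≤
      max (6 * r * x) (72 * r * matOpNorm E ^ 2 / lam ⟨0, by omega⟩) := by
  set z : Fin n := ⟨0, by omega⟩
  set N := matOpNorm E
  have hN : 0 ≤ N := norm_nonneg _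
  have hlamz : ∀ i, lam i ≤ lam z := fun i => hlam (Nat.zero_le i.val)
  have hunit : ∀ i, tu i ⬝ᵥ tu i = 1 := fun i => by simp [htu]
  have hx0 : 0 ≤ x := hx.1 (Set.mem_insert 0 _)
  have hr : (1 : ℝ) ≤ r := by exact_mod_cast (hrchar z).2 (by linarith)
  rcases (show 0 ≤ lam z by linarith).eq_or_lt with hL | hL
  · exact le_max_of_le_left (by linarith [mul_nonneg (Nat.cast_nonneg r) hx0,
      sub_le_matOpNorm_of_eigenvalues_le hA hu hAu hlamz (hunit z) (hAtu z)])
  have hweyl : lam z - N ≤ tlam z :=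
    sub_matOpNorm_le_of_eigenvalues_le (hA.add hE) htu hAtu (fun i => htlam (Nat.zero_le i.val))
      (by simp [hu]) (hAu z)
  set S : Finset (Fin n) := {i | (i : ℕ) < r}
  have hgap : ∀ i ∈ Sᶜ, 23 / 48 * lam z ≤ |tlam z - lam i| := fun i hi => by
    have : lam i < lam z / 2 := by simpa [S, hrchar] using hi
    rw [abs_of_nonneg (by linarith)]
    linarith
  have hδ := sub_le_of_gap hA hu hAu hlamz (hunit z) (hAtu z) hx0
    (fun i hi j hj => hx.1 (Set.mem_insert_of_mem _
      ⟨i, j, by simpa [S] using hi, by simpa [S] using hj, rfl⟩))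
    (by positivity) hgap
  have hS : (#S : ℝ) ≤ r := by exact_mod_cast Fin.card_filter_val_lt.trans_le (min_le_right _ _)
  have hd : 2 * (N ^ 2 / (23 / 48 * lam z)) = 96 / 23 * (N ^ 2 / lam z) := by
    field_simp
    ring
  have hq : 0 ≤ N ^ 2 / lam z := by positivity
  rw [mul_div_assoc]
  rcases le_total (r * x) (36 * r * (N ^ 2 / lam z)) with h | h
  · exact le_max_of_le_right (by nlinarith [mul_le_mul_of_nonneg_left hS hx0])
  · exact le_max_of_le_left (by nlinarith [mul_le_mul_of_nonneg_left hS hx0])
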